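/- (Proposition 2, concavity of the anchor-node utility) Assume a ≥ e and let g be the inverse of the transmit-power function Q(R) = A·R^k·a^R + Q₀ (A > 0, k ≥ 1, Q₀ ≥ 0). Let I ⊆ (Q₀, ∞) be an open interval on which g(q) > 2, let w₁, w₂ ∈ (0, 1) with w₁ + w₂ = 1, and let E_tl, C, n, d, n_arx, S, P_sum > 0. Define the follower (anchor node) utility U_F(q) = w₁·(E_tl − C·q)/E_tl + w₂·( (4π·n/(3d³))·(1/n_arx + 1/S)·g(q)³ − P_sum/q ) for q ∈ I. Then U_F is strictly concave on I; in particular its second derivative is strictly negative on I. -/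

import Mathlib

/-- The underwater acoustic transmit-power function Q(R) = A·R^k·a^R + Q₀. -/
noncomputable def Qfun (A a k Q₀ : ℝ) : ℝ → ℝ := fun R => A * R ^ k * a ^ R + Q₀

/-- The follower (anchor node) utility (Eq. (10)):
U_F(q) = w₁·(E_tl − C·q)/E_tl + w₂·( (4π·n/(3d³))·(1/n_arx + 1/S)·g(q)³ − P_sum/q ). -/
noncomputable def UF (w₁ w₂ Etl C n d narx S Psum : ℝ) (g : ℝ → ℝ) : ℝ → ℝ :=
  fun q => w₁ * (Etl - C * q) / Etl +
    w₂ * ((4 * Real.pi * n / (3 * d ^ 3)) * (1 / narx + 1 / S) * (g q) ^ 3 - Psum / q)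

/-!
With `g` the inverse of `Q` and `R = g q`, we have `g' = 1 / Q'(R)` and
`(g³)'' = 3 R (2 Q'(R) - R Q''(R)) / Q'(R)³`. Writing `L = log a`,
`R Q''(R) - 2 Q'(R) = A a^R R^(k-1) ((k + R L)(R L + k - 3) + R L)`,
which is positive as soon as `R L > 2`; this holds for `R > 2` because `a ≥ e` gives `L ≥ 1`.
So `g³` is concave where `g > 2`, `-P_sum / q` is strictly concave for `q > 0`, and the energy
term is affine.
-/

open Real Set Filter Topology

noncomputable def Qfun' (A a k R : ℝ) : ℝ := A * a ^ R * R ^ (k - 1) * (k + R * log a)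

noncomputable def Qfun'' (A a k R : ℝ) : ℝ :=
  A * a ^ R * R ^ (k - 2) * ((k + R * log a) * (R * log a + k - 1) + R * log a)

lemma rpow_sub_one_mul_self {R : ℝ} (hR : R ≠ 0) (k : ℝ) : R ^ (k - 1) * R = R ^ k := by
  rw [rpow_sub_one hR, div_mul_cancel₀ _ hR]

section TransmitPower

variable {A a k R : ℝ}

theorem hasDerivAt_Qfun (Q₀ : ℝ) (ha : 0 < a) (hR : 0 < R) :
    HasDerivAt (Qfun A a k Q₀) (Qfun' A a k R) R := by
  have hpow : HasDerivAt (fun x : ℝ => x ^ k) (k * R ^ (k - 1)) R :=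
    hasDerivAt_rpow_const (Or.inl hR.ne')
  have hexp : HasDerivAt (fun x : ℝ => a ^ x) (a ^ R * log a) R :=
    (hasStrictDerivAt_const_rpow ha R).hasDerivAt
  refine (((hpow.const_mul A).mul hexp).add_const Q₀).congr_deriv ?_
  rw [Qfun', ← rpow_sub_one_mul_self hR.ne' k]
  ring

theorem hasDerivAt_Qfun' (ha : 0 < a) (hR : 0 < R) :
    HasDerivAt (Qfun' A a k) (Qfun'' A a k R) R := by
  have hexp : HasDerivAt (fun x : ℝ => a ^ x) (a ^ R * log a) R :=
    (hasStrictDerivAt_const_rpow ha R).hasDerivAt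
  have hpow : HasDerivAt (fun x : ℝ => x ^ (k - 1)) ((k - 1) * R ^ (k - 1 - 1)) R :=
    hasDerivAt_rpow_const (Or.inl hR.ne')
  have hlin : HasDerivAt (fun x : ℝ => k + x * log a) (1 * log a) R :=
    ((hasDerivAt_id R).mul_const (log a)).const_add k
  refine (((hexp.const_mul A).mul hpow).mul hlin).congr_deriv ?_
  simp only [Pi.mul_apply]
  rw [Qfun'', ← rpow_sub_one_mul_self hR.ne' (k - 1), show k - 1 - 1 = k - 2 by ring]
  ring

theorem lt_Qfun (Q₀ : ℝ) (hA : 0 < A) (ha : 0 < a) (hR : 0 < R) : Q₀ < Qfun A a k Q₀ R := by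
  have : 0 < A * R ^ k * a ^ R := by positivity
  simp only [Qfun]
  linarith

theorem Qfun'_pos (hA : 0 < A) (ha : 1 ≤ a) (hk : 0 < k) (hR : 0 < R) : 0 < Qfun' A a k R := by
  have : 0 ≤ log a := log_nonneg ha
  unfold Qfun'
  positivity

theorem mul_Qfun''_sub_two_mul_Qfun' (hR : 0 < R) :
    R * Qfun'' A a k R - 2 * Qfun' A a k R =
      A * a ^ R * R ^ (k - 1) * ((k + R * log a) * (R * log a + k - 3) + R * log a) := by
  rw [Qfun'', Qfun', ← rpow_sub_one_mul_self hR.ne' (k - 1), show k - 1 - 1 = k - 2 by ring]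
  ring

theorem two_mul_Qfun'_lt (hA : 0 < A) (ha : 0 < a) (hk : 1 ≤ k) (hR : 0 < R)
    (hRa : 2 < R * log a) : 2 * Qfun' A a k R < R * Qfun'' A a k R := by
  have hfactor : 0 < (k + R * log a) * (R * log a + k - 3) + R * log a := by
    have := mul_pos (by linarith : 0 < k + R * log a) (by linarith : 0 < R * log a + k - 3)
    linarith
  have := mul_Qfun''_sub_two_mul_Qfun' (A := A) (a := a) (k := k) hR
  have : 0 < A * a ^ R * R ^ (k - 1) * ((k + R * log a) * (R * log a + k - 3) + R * log a) := by
    positivity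
  linarith

end TransmitPower

theorem HasDerivAt.sq_mul_inv_comp {g F : ℝ → ℝ} {F' q : ℝ} (hg : HasDerivAt g (F (g q))⁻¹ q)
    (hF : HasDerivAt F F' (g q)) (hF0 : F (g q) ≠ 0) :
    HasDerivAt (fun y => g y ^ 2 * (F (g y))⁻¹)
      (g q * (2 * F (g q) - g q * F') / F (g q) ^ 3) q := by
  refine ((hg.pow 2).mul ((hF.comp q hg).inv hF0)).congr_deriv ?_
  simp only [Pi.pow_apply, Pi.inv_apply, Function.comp_apply]
  field_simp
  ring

structure IsInverseQfun (A a k Q₀ : ℝ) (g : ℝ → ℝ) : Prop where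
  left_inv : ∀ R, 0 < R → g (Qfun A a k Q₀ R) = R
  right_inv : ∀ y, Q₀ < y → Qfun A a k Q₀ (g y) = y
  strictMonoOn : StrictMonoOn g (Ioi Q₀)
  pos : ∀ y, Q₀ < y → 0 < g y

namespace IsInverseQfun

variable {A a k Q₀ : ℝ} {g : ℝ → ℝ}

theorem continuousAt (hg : IsInverseQfun A a k Q₀ g) (hA : 0 < A) (ha : 0 < a) {q : ℝ}
    (hq : Q₀ < q) : ContinuousAt g q := by
  refine continuousAt_of_monotoneOn_of_image_mem_nhds hg.strictMonoOn.monotoneOn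
    (Ioi_mem_nhds hq) ?_
  exact mem_of_superset (Ioi_mem_nhds (hg.pos q hq)) fun R hR =>
    ⟨Qfun A a k Q₀ R, lt_Qfun Q₀ hA ha hR, hg.left_inv R hR⟩

theorem hasDerivAt (hg : IsInverseQfun A a k Q₀ g) (hA : 0 < A) (ha : 1 ≤ a) (hk : 0 < k)
    {q : ℝ} (hq : Q₀ < q) : HasDerivAt g (Qfun' A a k (g q))⁻¹ q :=
  HasDerivAt.of_local_left_inverse (hg.continuousAt hA (by linarith) hq)
    (hasDerivAt_Qfun Q₀ (by linarith) (hg.pos q hq)) (Qfun'_pos hA ha hk (hg.pos q hq)).ne'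
    (eventually_of_mem (Ioi_mem_nhds hq) hg.right_inv)

end IsInverseQfun

noncomputable def UFcoeff (n d narx S : ℝ) : ℝ := 4 * π * n / (3 * d ^ 3) * (1 / narx + 1 / S)

theorem UFcoeff_pos {n d narx S : ℝ} (hn : 0 < n) (hd : 0 < d) (hnarx : 0 < narx) (hS : 0 < S) :
    0 < UFcoeff n d narx S := by
  unfold UFcoeff
  positivity

section Utility

variable {w₁ w₂ Etl C n d narx S Psum : ℝ} {g : ℝ → ℝ} {q : ℝ}

theorem hasDerivAt_UF {g' : ℝ} (hg : HasDerivAt g g' q) (hq : q ≠ 0) :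
    HasDerivAt (UF w₁ w₂ Etl C n d narx S Psum g)
      (w₁ * -C / Etl + w₂ * (UFcoeff n d narx S * (3 * (g q ^ 2 * g')) + Psum / q ^ 2)) q := by
  have henergy : HasDerivAt (fun q => w₁ * (Etl - C * q) / Etl) (w₁ * -C / Etl) q := by
    simpa using ((((hasDerivAt_id q).const_mul C).const_sub Etl).const_mul w₁).div_const Etl
  have hrecip : HasDerivAt (fun q => Psum / q) (-(Psum / q ^ 2)) q := by
    simpa [div_eq_mul_inv] using (hasDerivAt_inv hq).const_mul Psum
  refine (henergy.add ((((hg.pow 3).const_mul (UFcoeff n d narx S)).sub hrecip).const_mul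
    w₂)).congr_deriv ?_
  push_cast
  ring

theorem IsInverseQfun.deriv_deriv_UF {A a k Q₀ : ℝ} (hg : IsInverseQfun A a k Q₀ g)
    (hA : 0 < A) (ha : 1 ≤ a) (hk : 0 < k) (hQ₀ : 0 ≤ Q₀) (hq : Q₀ < q) :
    deriv (deriv (UF w₁ w₂ Etl C n d narx S Psum g)) q =
      w₂ * (UFcoeff n d narx S * (3 * (g q * (2 * Qfun' A a k (g q) - g q * Qfun'' A a k (g q)) /
        Qfun' A a k (g q) ^ 3)) - 2 * Psum / q ^ 3) := by
  have hderiv : deriv (UF w₁ w₂ Etl C n d narx S Psum g) =ᶠ[𝓝 q] fun y => w₁ * -C / Etl +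
      w₂ * (UFcoeff n d narx S * (3 * (g y ^ 2 * (Qfun' A a k (g y))⁻¹)) + Psum / y ^ 2) := by
    filter_upwards [Ioi_mem_nhds hq] with y hy
    exact (hasDerivAt_UF (hg.hasDerivAt hA ha hk hy) (hQ₀.trans_lt hy).ne').deriv
  have hcube := (hg.hasDerivAt hA ha hk hq).sq_mul_inv_comp
    (hasDerivAt_Qfun' (by linarith) (hg.pos q hq)) (Qfun'_pos hA ha hk (hg.pos q hq)).ne'
  have hrecip : HasDerivAt (fun y => Psum / y ^ 2) (-(2 * Psum / q ^ 3)) q := by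
    have hq0 : q ≠ 0 := (hQ₀.trans_lt hq).ne'
    refine (((hasDerivAt_pow 2 q).inv (pow_ne_zero 2 hq0)).const_mul Psum).congr_deriv ?_
    field_simp
    ring
  rw [hderiv.deriv_eq]
  refine (((((hcube.const_mul 3).const_mul _).add hrecip).const_mul w₂).const_add _).deriv.trans ?_
  ring

theorem IsInverseQfun.deriv_deriv_UF_neg {A a k Q₀ : ℝ} (hg : IsInverseQfun A a k Q₀ g)
    (hA : 0 < A) (ha : exp 1 ≤ a) (hk : 1 ≤ k) (hQ₀ : 0 ≤ Q₀) (hw₂ : 0 < w₂)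
    (hK : 0 < UFcoeff n d narx S) (hPsum : 0 < Psum) (hq : Q₀ < q) (hgq : 2 < g q) :
    deriv (deriv (UF w₁ w₂ Etl C n d narx S Psum g)) q < 0 := by
  have ha1 : 1 ≤ a := (one_le_exp zero_le_one).trans ha
  have hlog : 1 ≤ log a := (le_log_iff_exp_le (by linarith)).2 ha
  have hQ' : 0 < Qfun' A a k (g q) := Qfun'_pos hA ha1 (by linarith) (hg.pos q hq)
  have hgap : 2 * Qfun' A a k (g q) < g q * Qfun'' A a k (g q) :=
    two_mul_Qfun'_lt hA (by linarith) hk (hg.pos q hq) (by nlinarith)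
  have hcube : g q * (2 * Qfun' A a k (g q) - g q * Qfun'' A a k (g q)) / Qfun' A a k (g q) ^ 3
      < 0 :=
    div_neg_of_neg_of_pos (mul_neg_of_pos_of_neg (hg.pos q hq) (by linarith)) (by positivity)
  have hrecip : 0 < 2 * Psum / q ^ 3 := by
    have := hQ₀.trans_lt hq
    positivity
  have hK_cube := mul_neg_of_pos_of_neg hK (mul_neg_of_pos_of_neg three_pos hcube)
  rw [hg.deriv_deriv_UF hA ha1 (by linarith) hQ₀ hq]
  exact mul_neg_of_pos_of_neg hw₂ (by linarith)

end Utility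

theorem stmt_9_general (A a k Q₀ : ℝ) (hA : 0 < A) (ha : Real.exp 1 ≤ a) (hk : 1 ≤ k) (hQ₀ : 0 ≤ Q₀)
    (g : ℝ → ℝ)
    (hginv : ∀ R : ℝ, 0 < R → g (Qfun A a k Q₀ R) = R)
    (hgQ : ∀ y : ℝ, Q₀ < y → Qfun A a k Q₀ (g y) = y)
    (hgmono : StrictMonoOn g (Set.Ioi Q₀))
    (hgpos : ∀ y : ℝ, Q₀ < y → 0 < g y)
    (I : Set ℝ) (hIsub : I ⊆ Set.Ioi Q₀) (hIconv : Convex ℝ I)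
    (hg2 : ∀ q ∈ I, 2 < g q)
    (w₁ w₂ : ℝ) (hw₂ : w₂ ∈ Set.Ioo (0 : ℝ) 1)
    (Etl C n d narx S Psum : ℝ) (hn : 0 < n) (hd : 0 < d)
    (hnarx : 0 < narx) (hS : 0 < S) (hPsum : 0 < Psum) :
    StrictConcaveOn ℝ I (UF w₁ w₂ Etl C n d narx S Psum g) ∧
    ∀ q ∈ I, deriv (deriv (UF w₁ w₂ Etl C n d narx S Psum g)) q < 0 := by
  have hg : IsInverseQfun A a k Q₀ g := ⟨hginv, hgQ, hgmono, hgpos⟩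
  have hsecond : ∀ q ∈ I, deriv (deriv (UF w₁ w₂ Etl C n d narx S Psum g)) q < 0 :=
    fun q hq => hg.deriv_deriv_UF_neg hA ha hk hQ₀ hw₂.1 (UFcoeff_pos hn hd hnarx hS) hPsum
      (hIsub hq) (hg2 q hq)
  have ha1 : 1 ≤ a := (one_le_exp zero_le_one).trans ha
  have hcont : ContinuousOn (UF w₁ w₂ Etl C n d narx S Psum g) I := fun q hq =>
    (hasDerivAt_UF (hg.hasDerivAt hA ha1 (by linarith) (hIsub hq))
      (hQ₀.trans_lt (hIsub hq)).ne').continuousAt.continuousWithinAt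
  exact ⟨strictConcaveOn_of_deriv2_neg' hIconv hcont hsecond, hsecond⟩

/-- Proposition 2, concavity of the anchor-node utility: U_F is strictly
concave on I; in particular its second derivative is strictly negative on I. -/
theorem stmt_9 (A a k Q₀ : ℝ) (hA : 0 < A) (ha : Real.exp 1 ≤ a) (hk : 1 ≤ k) (hQ₀ : 0 ≤ Q₀)
    (g : ℝ → ℝ)
    (hginv : ∀ R : ℝ, 0 < R → g (Qfun A a k Q₀ R) = R)
    (hgQ : ∀ y : ℝ, Q₀ < y → Qfun A a k Q₀ (g y) = y)
    (hgmono : StrictMonoOn g (Set.Ioi Q₀))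
    (hgpos : ∀ y : ℝ, Q₀ < y → 0 < g y)
    (I : Set ℝ) (hIsub : I ⊆ Set.Ioi Q₀) (hIopen : IsOpen I) (hIconv : Convex ℝ I)
    (hg2 : ∀ q ∈ I, 2 < g q)
    (w₁ w₂ : ℝ) (hw₁ : w₁ ∈ Set.Ioo (0 : ℝ) 1) (hw₂ : w₂ ∈ Set.Ioo (0 : ℝ) 1)
    (hw : w₁ + w₂ = 1)
    (Etl C n d narx S Psum : ℝ) (hEtl : 0 < Etl) (hC : 0 < C) (hn : 0 < n) (hd : 0 < d)
    (hnarx : 0 < narx) (hS : 0 < S) (hPsum : 0 < Psum) :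
    StrictConcaveOn ℝ I (UF w₁ w₂ Etl C n d narx S Psum g) ∧
    ∀ q ∈ I, deriv (deriv (UF w₁ w₂ Etl C n d narx S Psum g)) q < 0 :=
  stmt_9_general A a k Q₀ hA ha hk hQ₀ g hginv hgQ hgmono hgpos I hIsub hIconv hg2 w₁ w₂ hw₂ Etl C n
    d narx S Psum hn hd hnarx hS hPsum
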